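/- arXiv:0801.0270 — 2 statements merged into one kernel-verified Lean document; each statement's English description precedes it below -/
import Mathlib

section
/- Let K(A,B) be a complete bipartite graph whose edges are colored with two colors, blue and green. If K(A,B) is an S1-type graph, then |A| ≥ 2^{|B|} + 2 or |B| ≥ 2^{|A|} + 2. -/
/-!
Common definitions for edge-colored complete bipartite graphs.

The complete bipartite graph `K(A,B)` with partite sets `α` and `β` is modeled on the
vertex type `α ⊕ β`; an edge-coloring with color type `γ` is a function `c : α → β → γ`
(giving the color of the edge between `a : α` and `b : β`).
-/

/-- The spanning subgraph of the complete bipartite graph on parts `α`, `β` consisting of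
the edges of color `k`, under the edge-coloring `c`. -/
def biColorGraph {α β γ : Type*} (c : α → β → γ) (k : γ) : SimpleGraph (α ⊕ β) where
  Adj x y := (∃ a b, x = Sum.inl a ∧ y = Sum.inr b ∧ c a b = k) ∨
             (∃ a b, x = Sum.inr b ∧ y = Sum.inl a ∧ c a b = k)
  symm := by
    refine ⟨?_⟩
    rintro x y (⟨a, b, hx, hy, hc⟩ | ⟨a, b, hx, hy, hc⟩)
    · exact Or.inr ⟨a, b, hy, hx, hc⟩
    · exact Or.inl ⟨a, b, hy, hx, hc⟩
  loopless := by
    refine ⟨?_⟩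
    rintro x (⟨a, b, hx, hy, _⟩ | ⟨a, b, hx, hy, _⟩) <;> subst hx <;> simp at hy

/-- `S` is the vertex set of a monochromatic tree: it induces a connected subgraph in some
color class.  (A single vertex also counts as a monochromatic tree.) -/
def IsMonoTreeSet {α β γ : Type*} (c : α → β → γ) (S : Set (α ⊕ β)) : Prop :=
  ∃ k, ((biColorGraph c k).induce S).Connected

/-- `P` is a partition of the vertex set of the complete bipartite graph into
(nonempty, pairwise vertex-disjoint) vertex sets of monochromatic trees. -/
def IsMonoTreePartition {α β γ : Type*} (c : α → β → γ) (P : Finset (Set (α ⊕ β))) : Prop :=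
  (∀ S ∈ P, IsMonoTreeSet c S) ∧ ∀ x : α ⊕ β, ∃! S, S ∈ P ∧ x ∈ S

/-- The vertex set can be partitioned into at most `m` vertex-disjoint monochromatic trees. -/
def HasMonoTreePartition {α β γ : Type*} (c : α → β → γ) (m : ℕ) : Prop :=
  ∃ P : Finset (Set (α ⊕ β)), IsMonoTreePartition c P ∧ P.card ≤ m

/-- Every vertex has color degree 3, i.e. all three colors appear on its incident edges. -/
def ColorDegreeThree {α β : Type*} (c : α → β → Fin 3) : Prop :=
  (∀ (a : α) (k : Fin 3), ∃ b, c a b = k) ∧ ∀ (b : β) (k : Fin 3), ∃ a, c a b = k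

/-! For 2-edge-colorings we use `Bool` as the color type: `true` = blue, `false` = green. -/

/-- The vertices of `α` all of whose incident edges are blue. -/
def XA {α β : Type*} (c : α → β → Bool) : Set α := {a | ∀ b, c a b = true}

/-- The vertices of `α` all of whose incident edges are green. -/
def YA {α β : Type*} (c : α → β → Bool) : Set α := {a | ∀ b, c a b = false}

/-- The vertices of `β` all of whose incident edges are blue. -/
def XB {α β : Type*} (c : α → β → Bool) : Set β := {b | ∀ a, c a b = true}

/-- The vertices of `β` all of whose incident edges are green. -/
def YB {α β : Type*} (c : α → β → Bool) : Set β := {b | ∀ a, c a b = false}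

/-- `S`-type graph: `X(G) ≠ ∅` and `Y(G) ≠ ∅`. -/
def IsSType {α β : Type*} (c : α → β → Bool) : Prop :=
  ((XA c).Nonempty ∨ (XB c).Nonempty) ∧ ((YA c).Nonempty ∨ (YB c).Nonempty)

/-- `M`-type graph: there are partitions `A = A1 ∪ A1ᶜ`, `B = B1 ∪ B1ᶜ` with all four parts
nonempty such that `K(A1,B1)` and `K(A1ᶜ,B1ᶜ)` are blue and `K(A1,B1ᶜ)`, `K(A1ᶜ,B1)`
are green. -/
def IsMType {α β : Type*} (c : α → β → Bool) : Prop :=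
  ∃ (A1 : Set α) (B1 : Set β),
    A1.Nonempty ∧ A1ᶜ.Nonempty ∧ B1.Nonempty ∧ B1ᶜ.Nonempty ∧
    (∀ a ∈ A1, ∀ b ∈ B1, c a b = true) ∧
    (∀ a ∈ A1ᶜ, ∀ b ∈ B1ᶜ, c a b = true) ∧
    (∀ a ∈ A1, ∀ b ∈ B1ᶜ, c a b = false) ∧
    (∀ a ∈ A1ᶜ, ∀ b ∈ B1, c a b = false)

/-- For a subset `Bi ⊆ B`, the set `b(Bi) ⊆ A` of vertices sending blue edges to all of `Bi`
and green edges to all of `Biᶜ`.  (Thus `b(B̄i) = bsetA c Biᶜ`.) -/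
def bsetA {α β : Type*} (c : α → β → Bool) (Bi : Set β) : Set α :=
  {a | (∀ b ∈ Bi, c a b = true) ∧ ∀ b ∈ Biᶜ, c a b = false}

/-- For a subset `Ai ⊆ A`, the set `b(Ai) ⊆ B` of vertices sending blue edges to all of `Ai`
and green edges to all of `Aiᶜ`. -/
def bsetB {α β : Type*} (c : α → β → Bool) (Ai : Set α) : Set β :=
  {b | (∀ a ∈ Ai, c a b = true) ∧ ∀ a ∈ Aiᶜ, c a b = false}

/-- `S1*`-type graph with `X(G) ∪ Y(G) ⊆ A`: `|B| = 1`, `|A1| ≥ 2` and `|A3| ≥ 2`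
(where `A1 = X(G)`, `A3 = Y(G)`). -/
def IsS1StarA {α β : Type*} [Fintype β] (c : α → β → Bool) : Prop :=
  Fintype.card β = 1 ∧ 2 ≤ (XA c).ncard ∧ 2 ≤ (YA c).ncard

/-- `S1'`-type graph with `X(G) ∪ Y(G) ⊆ A`: `|A1| ≥ 2`, `|A3| ≥ 2`, `|B| ≥ 2`, and for
every partition `B = Bi ∪ B̄i` into nonempty parts, `b(Bi) ≠ ∅` and `b(B̄i) ≠ ∅`. -/
def IsS1PrimeA {α β : Type*} [Fintype β] (c : α → β → Bool) : Prop :=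
  2 ≤ (XA c).ncard ∧ 2 ≤ (YA c).ncard ∧ 2 ≤ Fintype.card β ∧
  ∀ Bi : Set β, Bi.Nonempty → Biᶜ.Nonempty →
    (bsetA c Bi).Nonempty ∧ (bsetA c Biᶜ).Nonempty

/-- `S1*`-type graph with `X(G) ∪ Y(G) ⊆ B`. -/
def IsS1StarB {α β : Type*} [Fintype α] (c : α → β → Bool) : Prop :=
  Fintype.card α = 1 ∧ 2 ≤ (XB c).ncard ∧ 2 ≤ (YB c).ncard

/-- `S1'`-type graph with `X(G) ∪ Y(G) ⊆ B`. -/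
def IsS1PrimeB {α β : Type*} [Fintype α] (c : α → β → Bool) : Prop :=
  2 ≤ (XB c).ncard ∧ 2 ≤ (YB c).ncard ∧ 2 ≤ Fintype.card α ∧
  ∀ Ai : Set α, Ai.Nonempty → Aiᶜ.Nonempty →
    (bsetB c Ai).Nonempty ∧ (bsetB c Aiᶜ).Nonempty

/-- `S1`-type graph: `S1*`-type or `S1'`-type. -/
def IsS1 {α β : Type*} [Fintype α] [Fintype β] (c : α → β → Bool) : Prop :=
  IsS1StarA c ∨ IsS1PrimeA c ∨ IsS1StarB c ∨ IsS1PrimeB c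

/-- `S2`-type graph: an `S`-type graph that is not `S1`-type. -/
def IsS2 {α β : Type*} [Fintype α] [Fintype β] (c : α → β → Bool) : Prop :=
  IsSType c ∧ ¬ IsS1 c

/-!
Sort the vertices of `A` by their blue neighbourhoods in `B`. The `S1` condition says that every
proper nonempty `Bi ⊆ B` is the blue neighbourhood of some vertex (namely of the vertices of
`b(Bi)`), while `B` itself and `∅` are the blue neighbourhoods of the at least two vertices of
`A1` and of `A3` respectively. So the map `a ↦ blue neighbourhood of a` hits each of the
`2^|B|` subsets of `B`, and two of its fibres have at least two points.
-/

theorem Function.Surjective.natCard_add_two_le {α ι : Type*} [Finite α] {g : α → ι}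
    (hg : Function.Surjective g) {i j : ι} (hij : i ≠ j)
    (hi : 2 ≤ (g ⁻¹' {i}).ncard) (hj : 2 ≤ (g ⁻¹' {j}).ncard) :
    Nat.card ι + 2 ≤ Nat.card α := by
  obtain ⟨a, a', ha, ha', haa'⟩ := (Set.one_lt_ncard_iff).1 hi
  obtain ⟨b, b', hb, hb', hbb'⟩ := (Set.one_lt_ncard_iff).1 hj
  simp only [Set.mem_preimage, Set.mem_singleton_iff] at ha ha' hb hb'
  have ha'b' : a' ≠ b' := fun h => hij (by rw [← ha', ← hb', h])
  -- one extra point of each of the two big fibres can be dropped without losing surjectivity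
  have hsurj : g '' {a', b'}ᶜ = Set.univ := by
    refine Set.eq_univ_of_forall fun k => ?_
    by_cases hki : k = i
    · refine ⟨a, ?_, ha.trans hki.symm⟩
      simp only [Set.mem_compl_iff, Set.mem_insert_iff, Set.mem_singleton_iff, not_or]
      exact ⟨haa', fun h => hij (by rw [← ha, h, hb'])⟩
    by_cases hkj : k = j
    · refine ⟨b, ?_, hb.trans hkj.symm⟩
      simp only [Set.mem_compl_iff, Set.mem_insert_iff, Set.mem_singleton_iff, not_or]
      exact ⟨fun h => hij (by rw [← ha', ← h, hb]), hbb'⟩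
    obtain ⟨x, rfl⟩ := hg k
    refine ⟨x, ?_, rfl⟩
    simp only [Set.mem_compl_iff, Set.mem_insert_iff, Set.mem_singleton_iff, not_or]
    exact ⟨fun h => hki (h ▸ ha'), fun h => hkj (h ▸ hb')⟩
  have hle := Set.ncard_image_le (f := g) (Set.toFinite {a', b'}ᶜ)
  rw [hsurj, Set.ncard_univ, Set.ncard_compl, Set.ncard_pair ha'b'] at hle
  have := Set.ncard_le_card ({a', b'} : Set α)
  rw [Set.ncard_pair ha'b'] at this
  omega

section

variable {α β : Type*} (c : α → β → Bool)

def blueNbhd (a : α) : Set β := {b | c a b = true}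

theorem mem_bsetA_iff {S : Set β} {a : α} : a ∈ bsetA c S ↔ blueNbhd c a = S := by
  simp only [bsetA, blueNbhd, Set.mem_ofPred_eq, Set.mem_compl_iff, Set.ext_iff]
  refine ⟨fun ⟨h₁, h₂⟩ b => ⟨fun hb => ?_, h₁ b⟩, fun h => ⟨fun b hb => (h b).2 hb, fun b hb => ?_⟩⟩
  · by_contra hbS
    simp [h₂ b hbS] at hb
  · exact Bool.eq_false_iff.2 fun hab => hb ((h b).1 hab)

theorem blueNbhd_preimage_singleton (S : Set β) : blueNbhd c ⁻¹' {S} = bsetA c S :=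
  Set.ext fun _ => (mem_bsetA_iff c).symm

theorem XA_eq_bsetA_univ : XA c = bsetA c Set.univ := by
  ext a
  simp [XA, bsetA]

theorem YA_eq_bsetA_empty : YA c = bsetA c ∅ := by
  ext a
  simp [YA, bsetA]

end

theorem pow_card_add_two_le_card_of_bsetA_nonempty {α β : Type*} [Fintype α] [Fintype β]
    [Nonempty β] {c : α → β → Bool} (hX : 2 ≤ (XA c).ncard) (hY : 2 ≤ (YA c).ncard)
    (hb : ∀ Bi : Set β, Bi.Nonempty → Biᶜ.Nonempty → (bsetA c Bi).Nonempty) :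
    2 ^ Fintype.card β + 2 ≤ Fintype.card α := by
  classical
  have hXne : (bsetA c Set.univ).Nonempty :=
    Set.nonempty_of_ncard_ne_zero (by rw [← XA_eq_bsetA_univ]; omega)
  have hYne : (bsetA c ∅).Nonempty :=
    Set.nonempty_of_ncard_ne_zero (by rw [← YA_eq_bsetA_empty]; omega)
  have hsurj : Function.Surjective (blueNbhd c) := by
    intro S
    obtain ⟨a, ha⟩ : (bsetA c S).Nonempty := by
      rcases S.eq_empty_or_nonempty with rfl | hS
      · exact hYne
      rcases Sᶜ.eq_empty_or_nonempty with hSc | hSc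
      · rwa [Set.compl_empty_iff.1 hSc]
      · exact hb S hS hSc
    exact ⟨a, (mem_bsetA_iff c).1 ha⟩
  have := hsurj.natCard_add_two_le Set.empty_ne_univ
    (by rwa [blueNbhd_preimage_singleton, ← YA_eq_bsetA_empty])
    (by rwa [blueNbhd_preimage_singleton, ← XA_eq_bsetA_univ])
  simpa only [Nat.card_eq_fintype_card, Fintype.card_set] using this

section

variable {α β : Type*} [Fintype α] [Fintype β] {c : α → β → Bool}

theorem IsS1StarA.pow_card_add_two_le_card (h : IsS1StarA c) :
    2 ^ Fintype.card β + 2 ≤ Fintype.card α := by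
  obtain ⟨hβ, hX, hY⟩ := h
  have : Nonempty β := Fintype.card_pos_iff.1 (by omega)
  have : Subsingleton β := Fintype.card_le_one_iff_subsingleton.1 hβ.le
  refine pow_card_add_two_le_card_of_bsetA_nonempty hX hY fun Bi ⟨b, hb⟩ ⟨b', hb'⟩ => ?_
  exact absurd (Subsingleton.elim b b' ▸ hb) hb'

theorem IsS1PrimeA.pow_card_add_two_le_card (h : IsS1PrimeA c) :
    2 ^ Fintype.card β + 2 ≤ Fintype.card α := by
  obtain ⟨hX, hY, hβ, hb⟩ := h
  have : Nonempty β := Fintype.card_pos_iff.1 (by omega)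
  exact pow_card_add_two_le_card_of_bsetA_nonempty hX hY fun Bi hBi hBic => (hb Bi hBi hBic).1

end

theorem isS1StarA_flip_iff {α β : Type*} [Fintype α] {c : α → β → Bool} :
    IsS1StarA (flip c) ↔ IsS1StarB c :=
  Iff.rfl

theorem isS1PrimeA_flip_iff {α β : Type*} [Fintype α] {c : α → β → Bool} :
    IsS1PrimeA (flip c) ↔ IsS1PrimeB c :=
  Iff.rfl

/-- If a 2-edge-colored complete bipartite graph `K(A,B)` is an `S1`-type
graph, then `|A| ≥ 2^{|B|} + 2` or `|B| ≥ 2^{|A|} + 2`. -/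
theorem s1type_card_bound {α β : Type*} [Fintype α] [Fintype β] (c : α → β → Bool)
    (h : IsS1 c) :
    2 ^ Fintype.card β + 2 ≤ Fintype.card α ∨
    2 ^ Fintype.card α + 2 ≤ Fintype.card β := by
  rcases h with h | h | h | h
  · exact Or.inl h.pow_card_add_two_le_card
  · exact Or.inl h.pow_card_add_two_le_card
  · exact Or.inr (isS1StarA_flip_iff.2 h).pow_card_add_two_le_card
  · exact Or.inr (isS1PrimeA_flip_iff.2 h).pow_card_add_two_le_card
end

section
/- Let K(A,B) be the complete bipartite graph K(n,n) whose edges are colored with three colors (red, blue, green) so that every vertex has color degree 3. Let R be a red monochromatic connected component having the maximum number of vertices among all monochromatic components, with R1 = R ∩ A ≠ A and R2 = R ∩ B ≠ B, and set C = A − R1, D = B − R2 (so every edge between R1 and D and between R2 and C is blue or green). Suppose the vertex set of the induced complete bipartite graph K(C,D) cannot be partitioned into at most two vertex-disjoint monochromatic trees. Then |C| ≥ 3 and |D| ≥ 3. -/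
/-!
A red edge never leaves a red component, so the red neighbour that every vertex of `D` has
(color degree 3) lies in `C`. Assigning each vertex of `D` to one red neighbour in `C` splits
`K(C,D)` into `|C|` red stars; hence `|C| ≤ 2` would give a partition into at most two
monochromatic trees. Symmetrically for `D`.
-/

open SimpleGraph

lemma SimpleGraph.induce_connected_of_forall_adj_center {V : Type*} (G : SimpleGraph V)
    {S : Set V} {x₀ : V} (hx₀ : x₀ ∈ S) (hadj : ∀ y ∈ S, y ≠ x₀ → G.Adj x₀ y) :
    (G.induce S).Connected := by
  rw [connected_iff_exists_forall_reachable]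
  refine ⟨⟨x₀, hx₀⟩, fun ⟨y, hy⟩ => ?_⟩
  by_cases hyx : y = x₀
  · subst hyx; rfl
  · exact Adj.reachable (by simpa using hadj y hy hyx)

section MonoTreePartition

variable {α β γ : Type*} {c : α → β → γ}

lemma biColorGraph_adj_inl_inr {k : γ} {a : α} {b : β} :
    (biColorGraph c k).Adj (Sum.inl a) (Sum.inr b) ↔ c a b = k := by
  simp [biColorGraph]

lemma biColorGraph_adj_inr_inl {k : γ} {a : α} {b : β} :
    (biColorGraph c k).Adj (Sum.inr b) (Sum.inl a) ↔ c a b = k := by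
  simp [biColorGraph]

lemma SimpleGraph.ConnectedComponent.inl_mem_supp_iff_of_color_eq {k : γ}
    (Q : (biColorGraph c k).ConnectedComponent) {a : α} {b : β} (h : c a b = k) :
    Sum.inl a ∈ Q.supp ↔ Sum.inr b ∈ Q.supp := by
  simp only [ConnectedComponent.mem_supp_iff,
    ConnectedComponent.sound (biColorGraph_adj_inl_inr.mpr h).reachable]

lemma HasMonoTreePartition.mono {m m' : ℕ} (h : HasMonoTreePartition c m) (hm : m ≤ m') :
    HasMonoTreePartition c m' :=
  let ⟨P, hP, hcard⟩ := h
  ⟨P, hP, hcard.trans hm⟩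

lemma hasMonoTreePartition_of_fibers {ι : Type*} [Finite ι] (f : α ⊕ β → ι)
    (hf : ∀ i, IsMonoTreeSet c (f ⁻¹' {i})) : HasMonoTreePartition c (Nat.card ι) := by
  classical
  have := Fintype.ofFinite ι
  refine ⟨Finset.univ.image (fun i => f ⁻¹' {i}), ⟨?_, fun x => ⟨f ⁻¹' {f x}, ?_, ?_⟩⟩, ?_⟩
  · simp only [Finset.mem_image, Finset.mem_univ, true_and, forall_exists_index]
    rintro S i rfl
    exact hf i
  · simp
  · simp only [Finset.mem_image, Finset.mem_univ, true_and, and_imp, forall_exists_index]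
    rintro S i rfl hx
    rw [Set.mem_preimage, Set.mem_singleton_iff] at hx
    rw [hx]
  · rw [Nat.card_eq_fintype_card]
    exact Finset.card_image_le

lemma hasMonoTreePartition_of_forall_exists_left [Finite α] (k : γ)
    (h : ∀ b, ∃ a, c a b = k) : HasMonoTreePartition c (Nat.card α) := by
  choose g hg using h
  refine hasMonoTreePartition_of_fibers (Sum.elim id g) fun a => ⟨k, ?_⟩
  refine (biColorGraph c k).induce_connected_of_forall_adj_center (x₀ := Sum.inl a) rfl ?_
  rintro (a' | b) hy hne
  · exact absurd (congrArg Sum.inl hy) hne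
  · rw [biColorGraph_adj_inl_inr, ← show g b = a from hy]
    exact hg b

lemma hasMonoTreePartition_of_forall_exists_right [Finite β] (k : γ)
    (h : ∀ a, ∃ b, c a b = k) : HasMonoTreePartition c (Nat.card β) := by
  choose g hg using h
  refine hasMonoTreePartition_of_fibers (Sum.elim g id) fun b => ⟨k, ?_⟩
  refine (biColorGraph c k).induce_connected_of_forall_adj_center (x₀ := Sum.inr b) rfl ?_
  rintro (a | b') hy hne
  · rw [biColorGraph_adj_inr_inl, ← show g a = b from hy]
    exact hg a
  · exact absurd (congrArg Sum.inr hy) hne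

end MonoTreePartition

theorem claim_C_D_large_general {n : ℕ} (c : Fin n → Fin n → Fin 3)
    (hdeg : ColorDegreeThree c)
    (R : (biColorGraph c 0).ConnectedComponent)
    (C D : Set (Fin n))
    (hC : C = {a : Fin n | Sum.inl a ∈ R.supp}ᶜ)
    (hD : D = {b : Fin n | Sum.inr b ∈ R.supp}ᶜ)
    (hCD : ¬ HasMonoTreePartition (fun (a : C) (b : D) => c a.1 b.1) 2) :
    3 ≤ C.ncard ∧ 3 ≤ D.ncard := by
  have hred_to_C : ∀ b : D, ∃ a : C, c a b = 0 := by
    rintro ⟨b, hb⟩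
    obtain ⟨a, ha⟩ := hdeg.2 b 0
    refine ⟨⟨a, ?_⟩, ha⟩
    rw [hD] at hb
    exact hC ▸ fun haR => hb ((R.inl_mem_supp_iff_of_color_eq ha).mp haR)
  have hred_to_D : ∀ a : C, ∃ b : D, c a b = 0 := by
    rintro ⟨a, ha⟩
    obtain ⟨b, hb⟩ := hdeg.1 a 0
    refine ⟨⟨b, ?_⟩, hb⟩
    rw [hC] at ha
    exact hD ▸ fun hbR => ha ((R.inl_mem_supp_iff_of_color_eq hb).mpr hbR)
  constructor <;> by_contra! hsmall
  · refine hCD ((hasMonoTreePartition_of_forall_exists_left 0 hred_to_C).mono ?_)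
    rw [Nat.card_coe_set_eq]
    omega
  · refine hCD ((hasMonoTreePartition_of_forall_exists_right 0 hred_to_D).mono ?_)
    rw [Nat.card_coe_set_eq]
    omega

/-- **Claim 2.** Colors: `0` = red, `1` = blue, `2` = green.
In the situation of Claim 1 (maximum red component `R` with `R1 ≠ A`, `R2 ≠ B`,
`C = A - R1`, `D = B - R2`, and `K(C,D)` not partitionable into at most two vertex-disjoint
monochromatic trees), we have `|C| ≥ 3` and `|D| ≥ 3`. -/
theorem claim_C_D_large {n : ℕ} (c : Fin n → Fin n → Fin 3)
    (hdeg : ColorDegreeThree c)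
    (R : (biColorGraph c 0).ConnectedComponent)
    (hmax : ∀ (k : Fin 3) (Q : (biColorGraph c k).ConnectedComponent),
      Q.supp.ncard ≤ R.supp.ncard)
    (hR1 : {a : Fin n | Sum.inl a ∈ R.supp} ≠ Set.univ)
    (hR2 : {b : Fin n | Sum.inr b ∈ R.supp} ≠ Set.univ)
    (C D : Set (Fin n))
    (hC : C = {a : Fin n | Sum.inl a ∈ R.supp}ᶜ)
    (hD : D = {b : Fin n | Sum.inr b ∈ R.supp}ᶜ)
    (hCD : ¬ HasMonoTreePartition (fun (a : C) (b : D) => c a.1 b.1) 2) :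
    3 ≤ C.ncard ∧ 3 ≤ D.ncard :=
  claim_C_D_large_general c hdeg R C D hC hD hCD
end
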